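/- arXiv:2511.14985 — 2 statements merged into one kernel-verified Lean document; each statement's English description precedes it below -/
import Mathlib

section
/- Let Z, X, Y be Hausdorff topological spaces, let K ⊆ X be a closed subset, let φ : Z → X be a branched covering with branching set K, and let π : X → Y be a covering map all of whose fibers are finite. Then the composition π ∘ φ : Z → Y is a branched covering with branching set π(K); that is, π ∘ φ is open and proper, π(K) is closed in Y, and the restriction of π ∘ φ to Z \ (π ∘ φ)⁻¹(π(K)) → Y \ π(K) is a covering map all of whose fibers are finite. -/
open Topology

noncomputable section

section Aux

open Set

variable {E X : Type*} [TopologicalSpace E] [TopologicalSpace X] {f : E → X}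

lemma auxClosedMap (hf : IsCoveringMap f) (hfin : ∀ x, (f ⁻¹' {x}).Finite) :
    IsClosedMap f := by
  intro C hC
  rw [← isOpen_compl_iff, isOpen_iff_forall_mem_open]
  intro y hy
  haveI : Finite ↥(f ⁻¹' {y}) := (hfin y).to_subtype
  obtain ⟨_, U, hyU, hUo, _, H, hH⟩ := hf y
  set A : ↥(f ⁻¹' {y}) → Set ↥U := fun e => (fun u => (H.symm (u, e)).1) ⁻¹' Cᶜ with hA
  have hAo : ∀ e, IsOpen (A e) := fun e => hC.isOpen_compl.preimage (by fun_prop)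
  refine ⟨U ∩ ⋂ e, Subtype.val '' A e, ?_,
    hUo.inter (isOpen_iInter_of_finite fun e => hUo.isOpenMap_subtype_val _ (hAo e)),
    ⟨hyU, mem_iInter.2 fun e => ⟨⟨y, hyU⟩, ?_, rfl⟩⟩⟩
  · rintro u ⟨hu, huA⟩ ⟨c, hcC, rfl⟩
    have hcU : c ∈ f ⁻¹' U := hu
    obtain ⟨u'', hu'', hu''eq⟩ := mem_iInter.1 huA (H ⟨c, hcU⟩).2
    have h1 : u'' = (H ⟨c, hcU⟩).1 := Subtype.ext (hu''eq.trans (hH ⟨c, hcU⟩).symm)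
    refine hu'' ?_
    show (H.symm (u'', (H ⟨c, hcU⟩).2)).1 ∈ C
    rw [h1, Prod.mk.eta, H.symm_apply_apply]
    exact hcC
  · intro hz
    apply hy
    refine ⟨_, hz, ?_⟩
    have := hH (H.symm (⟨y, hyU⟩, e))
    rw [H.apply_symm_apply] at this
    exact this.symm

lemma auxProper (hf : IsCoveringMap f) (hfin : ∀ x, (f ⁻¹' {x}).Finite) :
    IsProperMap f :=
  isProperMap_iff_isClosedMap_and_compact_fibers.2
    ⟨hf.continuous, auxClosedMap hf hfin, fun x => (hfin x).isCompact⟩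

lemma auxDiscreteFiber (hf : IsLocalHomeomorph f) (b : X) :
    DiscreteTopology ↥(f ⁻¹' {b}) := by
  rw [discreteTopology_iff_isOpen_singleton]
  rintro ⟨a, ha⟩
  rw [isOpen_induced_iff]
  obtain ⟨e, hae, hfe⟩ := hf a
  refine ⟨e.source, e.open_source, ?_⟩
  ext ⟨x, hx⟩
  simp only [Set.mem_preimage, Set.mem_singleton_iff, Subtype.ext_iff]
  constructor
  · intro hxe
    refine e.injOn hxe hae ?_
    rw [← hfe]
    have hx' : f x = b := hx
    have ha' : f a = b := ha
    rw [hx', ha']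
  · rintro rfl
    exact hae

lemma auxCovering [T2Space E] (hf : IsLocalHomeomorph f) (hc : IsClosedMap f)
    (hfin : ∀ x, (f ⁻¹' {x}).Finite) :
    IsCoveringMap f :=
  isCoveringMap_iff_isCoveringMapOn_univ.mpr
    (hc.isCoveringMapOn_of_isLocalHomeomorphOn (fun x _ => hfin x)
      (by rw [preimage_univ, ← isLocalHomeomorph_iff_isLocalHomeomorphOn_univ]; exact hf))

lemma auxInclusionOpenEmbedding {s t : Set E} (hsub : s ⊆ t) (hs : IsOpen s) :
    Topology.IsOpenEmbedding (Set.inclusion hsub) := by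
  refine ⟨Topology.IsEmbedding.inclusion hsub, ?_⟩
  rw [Set.range_inclusion]
  exact hs.preimage continuous_subtype_val

end Aux

/-- A branched covering with branching set `L`: an open proper (continuous) map whose
restriction to the complement of `L` is a covering map with finite fibers. -/
def IsBranchedCovering {A B : Type*} [TopologicalSpace A] [TopologicalSpace B]
    (f : A → B) (L : Set B) : Prop :=
  IsClosed L ∧ IsOpenMap f ∧ IsProperMap f ∧
    IsCoveringMap (Lᶜ.restrictPreimage f) ∧
    ∀ y : ↥(Lᶜ), Set.Finite (Lᶜ.restrictPreimage f ⁻¹' {y})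

/-- The composition of a branched covering `φ : Z → X` with branching set `K` and a
covering map `π : X → Y` with finite fibers is a branched covering with branching
set `π(K)`. -/
theorem isBranchedCovering_comp_coveringMap
    (Z X Y : Type*) [TopologicalSpace Z] [TopologicalSpace X] [TopologicalSpace Y]
    [T2Space Z] [T2Space X] [T2Space Y]
    (K : Set X) (hK : IsClosed K)
    (φ : Z → X) (hφ : IsBranchedCovering φ K)
    (π : X → Y) (hπ : IsCoveringMap π) (hπfin : ∀ y : Y, Set.Finite (π ⁻¹' {y})) :
    IsBranchedCovering (π ∘ φ) (π '' K) := by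
  obtain ⟨hKc, hφopen, hφproper, hφcov, hφfin⟩ := hφ
  set L : Set Y := π '' K with hL
  have hπproper : IsProperMap π := auxProper hπ hπfin
  have hLc : IsClosed L := auxClosedMap hπ hπfin K hK
  have hproper : IsProperMap (π ∘ φ) := hπproper.comp hφproper
  -- the set of points of Z over the complement of L
  set W : Set Z := (π ∘ φ) ⁻¹' Lᶜ with hW
  -- points of W map into Kᶜ under φ
  have hWK : ∀ z ∈ W, φ z ∈ Kᶜ := by
    intro z hz hzK
    exact hz ⟨φ z, hzK, rfl⟩
  -- fibers of π ∘ φ over points outside L are finite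
  have hfib : ∀ y ∈ Lᶜ, ((π ∘ φ) ⁻¹' {y}).Finite := by
    intro y hy
    have h1 : (π ∘ φ) ⁻¹' {y} = ⋃ x ∈ π ⁻¹' {y}, φ ⁻¹' {x} := by
      ext z
      simp [Set.mem_iUnion]
    rw [h1]
    refine Set.Finite.biUnion (hπfin y) ?_
    intro x hx
    have hxK : x ∈ Kᶜ := by
      intro hxK
      exact hy ⟨x, hxK, hx⟩
    have h2 : φ ⁻¹' {x} = Subtype.val '' ((Kᶜ.restrictPreimage φ) ⁻¹' {⟨x, hxK⟩}) := by
      ext z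
      constructor
      · intro hz
        have hz' : φ z = x := hz
        exact ⟨⟨z, show φ z ∈ Kᶜ from hz' ▸ hxK⟩, by
          simp [Set.restrictPreimage, Subtype.ext_iff, hz'], rfl⟩
      · rintro ⟨⟨z', hz'⟩, hz'', rfl⟩
        have : φ z' = x := congrArg Subtype.val hz''
        exact this
    rw [h2]
    exact ((hφfin ⟨x, hxK⟩).image _)
  -- the restricted map
  set g := Lᶜ.restrictPreimage (π ∘ φ) with hg
  have hgfin : ∀ y : ↥(Lᶜ), (g ⁻¹' {y}).Finite := by
    intro y
    refine Set.Finite.subset ((Set.Finite.preimage (Subtype.coe_injective.injOn)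
      (hfib y.1 y.2)) : ((Subtype.val : ↥W → Z) ⁻¹'
        ((π ∘ φ) ⁻¹' {y.1})).Finite) ?_
    intro z hz
    have : g z = y := hz
    exact congrArg Subtype.val this
  -- g is a local homeomorphism
  have hsub : W ⊆ φ ⁻¹' Kᶜ := fun z hz => hWK z hz
  have hWopen : IsOpen W := (hLc.isOpen_compl).preimage (hπ.continuous.comp hφproper.continuous)
  have hlocal : IsLocalHomeomorph g := by
    refine IsLocalHomeomorph.of_comp (g := (Subtype.val : ↥(Lᶜ) → Y)) ?_ ?_ ?_
    · have h1 : IsLocalHomeomorph (Set.inclusion hsub) :=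
        (auxInclusionOpenEmbedding hsub hWopen).isLocalHomeomorph
      have h2 : IsLocalHomeomorph (Kᶜ.restrictPreimage φ) := hφcov.isLocalHomeomorph
      have h3 : IsLocalHomeomorph (Subtype.val : ↥(Kᶜ) → X) :=
        (hKc.isOpen_compl.isOpenEmbedding_subtypeVal).isLocalHomeomorph
      have h4 : IsLocalHomeomorph π := hπ.isLocalHomeomorph
      exact (h4.comp (h3.comp (h2.comp h1)) : )
    · exact (hLc.isOpen_compl.isOpenEmbedding_subtypeVal).isLocalHomeomorph
    · exact (hπ.continuous.comp hφproper.continuous).restrictPreimage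
  -- g is a closed map
  have hgclosed : IsClosedMap g := hproper.isClosedMap.restrictPreimage _
  refine ⟨hLc, hπ.isOpenMap.comp hφopen, hproper, ?_, hgfin⟩
  exact auxCovering hlocal hgclosed hgfin
end
end

section
/- Let C be a compact proper subset of S³ (the unit sphere in euclidean ℝ⁴), and let U ⊆ S³ be a nonempty open set. Then there exists a self-homeomorphism h : S³ → S³ such that h(C) ⊆ U. -/
/-!
Pick `p ∉ C`. Stereographic projection from `p` identifies the sphere with the one-point
compactification of the hyperplane `(ℝ ∙ p)ᗮ`, with `p` as the point at infinity, so `C` becomes a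
compact subset of that hyperplane, and `U` meets the hyperplane because the point at infinity is
not isolated. The map `x ↦ c + t • x` with small `t > 0` moves any compact subset of a real normed
space into any ball around `c`, and it extends to a homeomorphism of the one-point compactification.
-/

/-- The unit sphere in euclidean `ℝ⁴`. -/
abbrev S3 : Set (EuclideanSpace ℝ (Fin 4)) := Metric.sphere 0 1

open Metric Set OnePoint

theorem exists_homeomorph_image_subset_of_isCompact {V : Type*} [NormedAddCommGroup V]
    [NormedSpace ℝ V] {K : Set V} (hK : IsCompact K) {W : Set V} (hW : IsOpen W)
    (hWne : W.Nonempty) : ∃ f : V ≃ₜ V, f '' K ⊆ W := by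
  obtain ⟨c, hc⟩ := hWne
  obtain ⟨r, hr, hball⟩ := Metric.isOpen_iff.1 hW c hc
  obtain ⟨R, hR, hKR⟩ := hK.isBounded.exists_pos_norm_le
  have ht : 0 < r / (2 * R) := by positivity
  refine ⟨(Homeomorph.smulOfNeZero _ ht.ne').trans (Homeomorph.addLeft c), ?_⟩
  rintro _ ⟨x, hx, rfl⟩
  apply hball
  show c + (r / (2 * R)) • x ∈ ball c r
  rw [mem_ball, dist_self_add_left, norm_smul, Real.norm_of_nonneg ht.le]
  calc r / (2 * R) * ‖x‖ ≤ r / (2 * R) * R := by gcongr; exact hKR x hx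
    _ = r / 2 := by field_simp
    _ < r := by linarith

theorem OnePoint.exists_homeomorph_image_subset_of_isCompact {V : Type*} [NormedAddCommGroup V]
    [NormedSpace ℝ V] [Nontrivial V] {C : Set (OnePoint V)} (hC : IsCompact C) (hCinf : ∞ ∉ C)
    {U : Set (OnePoint V)} (hU : IsOpen U) (hUne : U.Nonempty) :
    ∃ h : OnePoint V ≃ₜ OnePoint V, h '' C ⊆ U := by
  have hCK : ((↑) : V → OnePoint V) '' ((↑) ⁻¹' C) = C :=
    image_preimage_eq_of_subset fun x hx => ne_infty_iff_exists.1 (ne_of_mem_of_not_mem hx hCinf)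
  have hK : IsCompact (((↑) : V → OnePoint V) ⁻¹' C) := by
    rwa [isOpenEmbedding_coe.isCompact_iff, hCK]
  obtain ⟨f, hf⟩ := _root_.exists_homeomorph_image_subset_of_isCompact hK
    (hU.preimage continuous_coe) (denseRange_coe.exists_mem_open hU hUne)
  refine ⟨f.onePointCongr, ?_⟩
  rw [← hCK, ← image_comp]
  rintro _ ⟨x, hx, rfl⟩
  exact hf (mem_image_of_mem f hx)

theorem nontrivial_orthogonal_span_singleton {E : Type*} [NormedAddCommGroup E]
    [InnerProductSpace ℝ E] [FiniteDimensional ℝ E] (hE : 1 < Module.finrank ℝ E) (v : E) :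
    Nontrivial (ℝ ∙ v)ᗮ := by
  have hv : Module.finrank ℝ (ℝ ∙ v) ≤ 1 := by
    simpa using finrank_span_le_card (R := ℝ) ({v} : Set E)
  have := (ℝ ∙ v).finrank_add_finrank_orthogonal
  exact (Module.finrank_pos_iff (R := ℝ)).1 (by omega)

theorem exists_homeomorph_sphere_image_subset_of_isCompact_ne_univ {E : Type*}
    [NormedAddCommGroup E] [InnerProductSpace ℝ E] [FiniteDimensional ℝ E]
    (hE : 1 < Module.finrank ℝ E) {C : Set (sphere (0 : E) 1)} (hC : IsCompact C)
    (hCne : C ≠ univ) {U : Set (sphere (0 : E) 1)} (hU : IsOpen U) (hUne : U.Nonempty) :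
    ∃ h : sphere (0 : E) 1 ≃ₜ sphere (0 : E) 1, h '' C ⊆ U := by
  obtain ⟨p, hp⟩ := (ne_univ_iff_exists_notMem C).1 hCne
  have := nontrivial_orthogonal_span_singleton hE (p : E)
  let e := onePointHyperplaneHomeoUnitSphere (norm_eq_of_mem_sphere p)
  have he : e ∞ = p := rfl
  obtain ⟨h, hh⟩ := OnePoint.exists_homeomorph_image_subset_of_isCompact
    (e.isCompact_preimage.2 hC) (by simpa [he]) (hU.preimage e.continuous)
    (hUne.preimage e.surjective)
  refine ⟨e.symm.trans (h.trans e), ?_⟩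
  rintro _ ⟨x, hx, rfl⟩
  exact hh ⟨e.symm x, by simpa using hx, rfl⟩

/-- Any compact proper subset of `S³` can be moved into any nonempty open subset of `S³`
by a self-homeomorphism of `S³`. -/
theorem exists_homeomorph_image_subset_of_isCompact_ne_univ
    (C : Set ↥S3) (hC : IsCompact C) (hCne : C ≠ Set.univ)
    (U : Set ↥S3) (hU : IsOpen U) (hUne : U.Nonempty) :
    ∃ h : ↥S3 ≃ₜ ↥S3, h '' C ⊆ U :=
  exists_homeomorph_sphere_image_subset_of_isCompact_ne_univ (by simp) hC hCne hU hUne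
end
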